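/- Let P be a nonempty polyhedral set in ℝ^d, G ⊊ H faces of P, x = x_1 + x_2 with x_1 ∈ relint G and x_2 ∈ -relint N(P,H). Set L_3 = L(G)^⊥ ∩ L(H), and for a face F with G ⊆ F ⊆ H let F* = pos((F - x_1) ∩ L(G)^⊥) and H* = pos((H - x_1) ∩ L(G)^⊥). Then there exists ε > 0 such that for all w ∈ L_3 with ‖w‖ ≤ ε: x + w ∈ F - N(P,F) if and only if w ∈ F* - N_{L_3}(H*, F*). -/

import Mathlib

/-
Near `x = x₁ + x₂` the polyhedron `P` coincides with `x₁ + T`, where `T` is its tangent cone at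
`x₁`. Splitting `f - x₁ = p + q` with `p ∈ L(G)` and `q ∈ F*` matches a decomposition
`x + w = f - n` with `w = q - (q - w)`, `q - w ∈ N_{L₃}(H*, F*)`; this direction needs no
smallness. Conversely, for `w = u - v` with `u ∈ F*`, `v ∈ N_{L₃}(H*, F*)` one has `⟪u, v⟫ ≤ 0`,
so `u` and `v` are small with `w`: a small `u` keeps `x₁ + u` in `F`, and the point is to show that
`v - x₂` stays normal to `P` at `F`. As `T` is finitely generated (Minkowski–Weyl, by
Fourier–Motzkin elimination), it suffices to test finitely many generators `r`: those with
`⟪x₂, r⟫ > 0` leave a margin, and those with `⟪x₂, r⟫ = 0` point into `H`, because `-x₂` lies in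
the relative interior of `N(P, H)`; there `v` is nonpositive by definition of `N_{L₃}(H*, F*)`.
-/

open RealInnerProductSpace Pointwise

noncomputable section

abbrev Euc (d : ℕ) := EuclideanSpace ℝ (Fin d)

/-- A polyhedral set: intersection of finitely many closed half-spaces. -/
def IsPolyhedral {d : ℕ} (P : Set (Euc d)) : Prop :=
  ∃ s : Finset (Euc d × ℝ), P = {x | ∀ h ∈ s, ⟪h.1, x⟫ ≤ h.2}

/-- A (nonempty) face of a convex set: a nonempty convex extreme subset. -/
def IsFaceOf {d : ℕ} (P F : Set (Euc d)) : Prop :=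
  F.Nonempty ∧ Convex ℝ F ∧ IsExtreme ℝ P F

/-- The normal cone of `P` at the face `F`. -/
def normalCone {d : ℕ} (P F : Set (Euc d)) : Set (Euc d) :=
  {u | ∀ f ∈ F, ∀ z ∈ P, ⟪u, z - f⟫ ≤ 0}

/-- The dimension of a set: the rank of the direction of its affine hull. -/
def sdim {d : ℕ} (F : Set (Euc d)) : ℕ :=
  Module.finrank ℝ (affineSpan ℝ F).direction

/-- φ_P(x) = Σ_{F face of P} (-1)^{dim F} 1_{F - N(P,F)}(x). -/
def phi {d : ℕ} (P : Set (Euc d)) (x : Euc d) : ℤ :=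
  ∑ᶠ F ∈ {F : Set (Euc d) | IsFaceOf P F},
    (-1 : ℤ) ^ sdim F * (F - normalCone P F).indicator (fun _ => (1 : ℤ)) x

/-- A set is line-free if it contains no affine line. -/
def LineFree {d : ℕ} (P : Set (Euc d)) : Prop :=
  ∀ x y : Euc d, y ≠ 0 → ∃ t : ℝ, x + t • y ∉ P

/-- The positive hull (cone) generated by a set containing `0`:
`coneOf A = ⋃_{t>0} t • A`. -/
def coneOf {d : ℕ} (A : Set (Euc d)) : Set (Euc d) :=
  {y | ∃ t : ℝ, 0 < t ∧ ∃ a ∈ A, y = t • a}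

/-- The normal cone of `T` at its face `F`, computed within the ambient subspace `L`. -/
def normalConeIn {d : ℕ} (L : Submodule ℝ (Euc d)) (T F : Set (Euc d)) : Set (Euc d) :=
  {v | v ∈ L ∧ ∀ f ∈ F, ∀ z ∈ T, ⟪v, z - f⟫ ≤ 0}

open Filter Topology

namespace PointedCone

variable {R M N : Type*} [Field R] [LinearOrder R] [IsStrictOrderedRing R]
  [AddCommGroup M] [Module R M] [AddCommGroup N] [Module R N]

lemma apply_nonneg_of_mem_hull {s : Set N} {φ : Module.Dual R N} (hs : ∀ x ∈ s, 0 ≤ φ x)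
    {y : N} (hy : y ∈ hull R s) : 0 ≤ φ y := by
  induction hy using Submodule.span_induction with
  | mem x hx => exact hs x hx
  | zero => simp
  | add x y _ _ hx hy => rw [map_add]; exact add_nonneg hx hy
  | smul c x _ hx => rw [← Nonneg.coe_smul, map_smul, smul_eq_mul]; exact mul_nonneg c.2 hx

lemma eq_zero_of_mem_hull_of_apply_nonneg {s : Set N} {φ : Module.Dual R N}
    (hs : ∀ x ∈ s, φ x < 0) {y : N} (hy : y ∈ hull R s) (hφ : 0 ≤ φ y) : y = 0 := by
  -- strengthened so as to be stable under sums
  suffices φ y ≤ 0 ∧ (0 ≤ φ y → y = 0) from this.2 hφ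
  clear hφ
  induction hy using Submodule.span_induction with
  | mem x hx => exact ⟨(hs x hx).le, fun h => absurd h (hs x hx).not_ge⟩
  | zero => simp
  | add x y _ _ hx hy =>
    refine ⟨by rw [map_add]; linarith [hx.1, hy.1], fun h => ?_⟩
    rw [map_add] at h
    rw [hx.2 (by linarith [hy.1]), hy.2 (by linarith [hx.1]), add_zero]
  | smul c x _ hx =>
    rw [← Nonneg.coe_smul, map_smul, smul_eq_mul]
    refine ⟨mul_nonpos_of_nonneg_of_nonpos c.2 hx.1, fun h => ?_⟩
    rcases mul_eq_zero.1 ((mul_nonpos_of_nonneg_of_nonpos c.2 hx.1).antisymm h) with hc | hx0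
    · rw [hc, zero_smul]
    · rw [hx.2 hx0.ge, smul_zero]

lemma smul_add_smul_mem_hull_image2 {s t : Set N} (φ : Module.Dual R N) {x y : N}
    (hx : x ∈ hull R s) (hy : y ∈ hull R t) :
    (-φ y) • x + φ x • y ∈ hull R (Set.image2 (fun a b => (-φ b) • a + φ a • b) s t) := by
  induction hx using Submodule.span_induction with
  | mem a ha =>
    induction hy using Submodule.span_induction with
    | mem b hb => exact subset_hull (Set.mem_image2_of_mem ha hb)
    | zero => simp
    | add b b' _ _ hb hb' =>
      convert add_mem hb hb' using 1
      simp only [map_add, neg_add, add_smul, smul_add]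
      abel
    | smul c b _ hb =>
      convert smul_mem _ c.2 hb using 1
      simp only [← Nonneg.coe_smul, map_smul, smul_eq_mul, smul_add, smul_smul, neg_mul,
        mul_comm (c : R)]
  | zero => simp
  | add a a' _ _ ha ha' =>
    convert add_mem ha ha' using 1
    simp only [map_add, add_smul, smul_add]
    abel
  | smul c a _ ha =>
    convert smul_mem _ c.2 ha using 1
    simp only [← Nonneg.coe_smul, map_smul, smul_eq_mul, smul_add, smul_smul, mul_comm (c : R)]

/-- The Fourier–Motzkin elimination step. -/
lemma add_mem_hull_union_image2 {s t : Set N} {φ : Module.Dual R N} (hs : ∀ x ∈ s, 0 ≤ φ x)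
    (ht : ∀ x ∈ t, φ x < 0) {x z : N} (hx : x ∈ hull R s) (hz : z ∈ hull R t)
    (hxz : 0 ≤ φ (x + z)) :
    x + z ∈ hull R (s ∪ Set.image2 (fun a b => (-φ b) • a + φ a • b) s t) := by
  rw [map_add] at hxz
  refine (Submodule.span_union _ _).ge ?_
  rcases (apply_nonneg_of_mem_hull hs hx).eq_or_lt with h0 | hpos
  · rw [eq_zero_of_mem_hull_of_apply_nonneg ht hz (by linarith), add_zero]
    exact Submodule.mem_sup_left hx
  · have key : x + z = (φ x)⁻¹ • ((-φ z) • x + φ x • z) + (1 + φ z / φ x) • x := by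
      match_scalars
      · field_simp
        ring
      · field_simp
    rw [key]
    refine add_mem (Submodule.mem_sup_right (smul_mem _ (inv_nonneg.2 hpos.le)
      (smul_add_smul_mem_hull_image2 φ hx hz))) (Submodule.mem_sup_left (smul_mem _ ?_ hx))
    rw [one_add_div hpos.ne']
    exact div_nonneg hxz hpos.le

theorem fg_inf_dual_singleton {C : PointedCone R N} (hC : C.FG) (φ : Module.Dual R N) :
    (C ⊓ dual .id {φ}).FG := by
  classical
  obtain ⟨S, rfl⟩ := hC
  set T := S.filter (0 ≤ φ ·)
  set U := S.filter (φ · < 0)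
  have hT : ∀ x ∈ (T : Set N), 0 ≤ φ x := fun x hx => (Finset.mem_filter.1 hx).2
  have hU : ∀ x ∈ (U : Set N), φ x < 0 := fun x hx => (Finset.mem_filter.1 hx).2
  have hTS : ∀ ⦃x⦄, x ∈ T → x ∈ hull R (S : Set N) := fun x hx =>
    subset_hull (Finset.mem_filter.1 hx).1
  have hUS : ∀ ⦃x⦄, x ∈ U → x ∈ hull R (S : Set N) := fun x hx =>
    subset_hull (Finset.mem_filter.1 hx).1
  refine ⟨T ∪ Finset.image₂ (fun a b => (-φ b) • a + φ a • b) T U, le_antisymm ?_ ?_⟩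
  · rw [Submodule.span_le, Finset.coe_union, Finset.coe_image₂, Set.union_subset_iff]
    refine ⟨fun x hx => ⟨hTS hx, by simpa using hT x hx⟩, ?_⟩
    rintro _ ⟨a, ha, b, hb, rfl⟩
    refine ⟨add_mem (smul_mem _ (neg_nonneg.2 (hU b hb).le) (hTS ha))
      (smul_mem _ (hT a ha) (hUS hb)), ?_⟩
    simp [mul_comm]
  · rintro y ⟨hyS, hyφ⟩
    have hS : hull R (S : Set N) ≤ hull R T ⊔ hull R U := Submodule.span_le.2 fun x hx => by
      rcases le_or_gt 0 (φ x) with h | h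
      · exact Submodule.mem_sup_left (subset_hull (by simpa [T] using ⟨hx, h⟩))
      · exact Submodule.mem_sup_right (subset_hull (by simpa [U] using ⟨hx, h⟩))
    obtain ⟨x, hx, z, hz, rfl⟩ := Submodule.mem_sup.1 (hS hyS)
    rw [Finset.coe_union, Finset.coe_image₂]
    exact add_mem_hull_union_image2 hT hU hx hz (by simpa using hyφ)

theorem fg_top [Module.Finite R N] : (⊤ : PointedCone R N).FG := by
  classical
  obtain ⟨S, hS⟩ := Module.Finite.fg_top (R := R) (M := N)
  refine ⟨S ∪ S.image Neg.neg, Submodule.eq_top_iff'.2 fun x => ?_⟩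
  have hx : x ∈ Submodule.span R (S : Set N) := hS ▸ Submodule.mem_top
  suffices x ∈ hull R ↑(S ∪ S.image Neg.neg) ∧ -x ∈ hull R ↑(S ∪ S.image Neg.neg) from this.1
  induction hx using Submodule.span_induction with
  | mem y hy => exact ⟨subset_hull (by simp [Finset.mem_coe.1 hy]),
      subset_hull (by simp [Finset.mem_coe.1 hy])⟩
  | zero => simp
  | add y z _ _ hy hz => exact ⟨add_mem hy.1 hz.1, by rw [neg_add]; exact add_mem hy.2 hz.2⟩
  | smul c y _ hy =>
    rcases le_total 0 c with hc | hc
    · exact ⟨smul_mem _ hc hy.1, by rw [← smul_neg]; exact smul_mem _ hc hy.2⟩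
    · have hc' : 0 ≤ -c := neg_nonneg.2 hc
      exact ⟨by rw [← neg_smul_neg]; exact smul_mem _ hc' hy.2,
        by rw [← neg_smul]; exact smul_mem _ hc' hy.1⟩

theorem DualFG.fg [Module.Finite R N] {p : M →ₗ[R] N →ₗ[R] R} {C : PointedCone R N}
    (hC : C.DualFG p) : C.FG := by
  classical
  obtain ⟨s, rfl⟩ := hC.id
  clear hC
  induction s using Finset.induction_on with
  | empty => simpa using fg_top
  | insert φ s _ ih =>
    rw [Finset.coe_insert, dual_insert, inf_comm]
    exact fg_inf_dual_singleton ih φ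

end PointedCone

section

variable {V : Type*} [NormedAddCommGroup V] [NormedSpace ℝ V]

lemma sub_mem_direction_affineSpan {T : Set V} {a b : V} (ha : a ∈ T) (hb : b ∈ T) :
    a - b ∈ (affineSpan ℝ T).direction := by
  simpa [direction_affineSpan] using vsub_mem_vectorSpan ℝ ha hb

lemma exists_pos_add_smul_mem_of_mem_intrinsicInterior {s : Set V} {x v : V}
    (hx : x ∈ intrinsicInterior ℝ s) (hv : v ∈ (affineSpan ℝ s).direction) :
    ∃ t > (0 : ℝ), x + t • v ∈ s := by
  obtain ⟨z, hz, rfl⟩ := hx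
  obtain ⟨U, hU, hUs⟩ := mem_nhds_subtype _ _ _ |>.1 (mem_interior_iff_mem_nhds.1 hz)
  have hline : Tendsto (fun t : ℝ => (z : V) + t • v) (𝓝 0) (𝓝 z) := by
    simpa using tendsto_const_nhds.add ((tendsto_id (x := 𝓝 (0 : ℝ))).smul_const v)
  have hmem : ∀ᶠ t in 𝓝[>] (0 : ℝ), (z : V) + t • v ∈ U :=
    (hline.eventually hU).filter_mono nhdsWithin_le_nhds
  obtain ⟨t, htU, ht⟩ := (hmem.and self_mem_nhdsWithin).exists
  have hspan : (z : V) + t • v ∈ affineSpan ℝ s := by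
    simpa [vadd_eq_add, add_comm] using
      AffineSubspace.vadd_mem_of_mem_direction (Submodule.smul_mem _ t hv) z.2
  exact ⟨t, ht, @hUs ⟨_, hspan⟩ htU⟩

end

section

variable {E : Type*} [NormedAddCommGroup E] [InnerProductSpace ℝ E]

def polyhedron (s : Finset (E × ℝ)) : Set E := {x | ∀ h ∈ s, ⟪h.1, x⟫ ≤ h.2}

def tangentCone (s : Finset (E × ℝ)) (x : E) : PointedCone ℝ E :=
  PointedCone.dual (innerₗ E) ((fun h => -h.1) '' {h ∈ s | ⟪h.1, x⟫ = h.2})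

variable {s : Finset (E × ℝ)} {x y z : E}

lemma mem_tangentCone : y ∈ tangentCone s x ↔ ∀ h ∈ s, ⟪h.1, x⟫ = h.2 → ⟪h.1, y⟫ ≤ 0 := by
  simp only [tangentCone, PointedCone.mem_dual, Set.forall_mem_image, innerₗ_apply_apply,
    inner_neg_left, neg_nonneg, Set.mem_ofPred_eq, and_imp]

lemma sub_mem_tangentCone (hz : z ∈ polyhedron s) : z - x ∈ tangentCone s x :=
  mem_tangentCone.2 fun h hs hx => by rw [inner_sub_right, hx]; linarith [hz h hs]

lemma tangentCone_fg [FiniteDimensional ℝ E] : (tangentCone s x).FG :=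
  (PointedCone.DualFG.dual_of_finite _ ((s.finite_toSet.subset fun _ h => h.1).image _)).fg

lemma eventually_add_mem_polyhedron (hx : x ∈ polyhedron s) :
    ∀ᶠ y in 𝓝 0, y ∈ tangentCone s x → x + y ∈ polyhedron s := by
  have hstrict : ∀ᶠ y in 𝓝 (0 : E), ∀ h ∈ s, ⟪h.1, x⟫ < h.2 → ⟪h.1, x + y⟫ < h.2 := by
    refine (eventually_all_finset s).2 fun h _ => ?_
    by_cases hlt : ⟪h.1, x⟫ < h.2
    · have hcont : Continuous fun y => ⟪h.1, x + y⟫ := by fun_prop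
      filter_upwards [hcont.continuousAt.eventually (gt_mem_nhds (by simpa using hlt))]
        with y hy using fun _ => hy
    · exact Eventually.of_forall fun _ h' => absurd h' hlt
  filter_upwards [hstrict] with y hy hyK h hs
  rcases (hx h hs).lt_or_eq with hlt | heq
  · exact (hy h hs hlt).le
  · rw [inner_add_right, heq]
    linarith [mem_tangentCone.1 hyK h hs heq]

lemma exists_pos_add_smul_mem_polyhedron (hx : x ∈ polyhedron s) (hy : y ∈ tangentCone s x) :
    ∃ t > (0 : ℝ), x + t • y ∈ polyhedron s := by
  have hsmall : Tendsto (fun t : ℝ => t • y) (𝓝[>] 0) (𝓝 0) := by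
    simpa using ((tendsto_id (x := 𝓝 (0 : ℝ))).smul_const y).mono_left nhdsWithin_le_nhds
  obtain ⟨t, ht, htpos⟩ :=
    ((hsmall.eventually (eventually_add_mem_polyhedron hx)).and self_mem_nhdsWithin).exists
  exact ⟨t, htpos, ht (PointedCone.smul_mem _ htpos.le hy)⟩

lemma eventually_forall_inner_add_nonpos {R : Finset E} {u : E} {N : Set E}
    (hu : ∀ r ∈ R, ⟪u, r⟫ ≤ 0) (hN : ∀ r ∈ R, ⟪u, r⟫ = 0 → ∀ v ∈ N, ⟪v, r⟫ ≤ 0) :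
    ∀ᶠ v in 𝓝 0, v ∈ N → ∀ y ∈ PointedCone.hull ℝ (R : Set E), ⟪u + v, y⟫ ≤ 0 := by
  have hstrict : ∀ᶠ v in 𝓝 (0 : E), ∀ r ∈ R, ⟪u, r⟫ < 0 → ⟪u + v, r⟫ < 0 := by
    refine (eventually_all_finset R).2 fun r _ => ?_
    by_cases hlt : ⟪u, r⟫ < 0
    · have hcont : Continuous fun v => ⟪u + v, r⟫ := by fun_prop
      filter_upwards [hcont.continuousAt.eventually (gt_mem_nhds (by simpa using hlt))]
        with v hv using fun _ => hv
    · exact Eventually.of_forall fun _ h' => absurd h' hlt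
  filter_upwards [hstrict] with v hv hvN y hy
  have hgen : ∀ r ∈ (R : Set E), 0 ≤ (-innerₗ E (u + v)) r := fun r hr => by
    rw [LinearMap.neg_apply, innerₗ_apply_apply, neg_nonneg]
    rcases (hu r hr).lt_or_eq with hlt | heq
    · exact (hv r hr hlt).le
    · rw [inner_add_left, heq, zero_add]
      exact hN r hr heq v hvN
  have := PointedCone.apply_nonneg_of_mem_hull hgen hy
  rwa [LinearMap.neg_apply, innerₗ_apply_apply, neg_nonneg] at this

lemma norm_le_norm_sub_of_inner_nonpos {u v : E} (h : ⟪u, v⟫ ≤ 0) :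
    ‖u‖ ≤ ‖u - v‖ ∧ ‖v‖ ≤ ‖u - v‖ := by
  have hsq : ‖u‖ ^ 2 + ‖v‖ ^ 2 ≤ ‖u - v‖ ^ 2 := by rw [norm_sub_sq_real]; linarith
  constructor <;>
    refine (pow_le_pow_iff_left₀ (norm_nonneg _) (norm_nonneg _) two_ne_zero).1 ?_ <;>
    linarith [sq_nonneg ‖u‖, sq_nonneg ‖v‖]

end

section

local notation "L(" S ")" => AffineSubspace.direction (affineSpan ℝ S)

variable {d : ℕ}

/-- The cone `T* = pos((T - x₁) ∩ L(G)ᗮ)`. -/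
def starCone (G : Set (Euc d)) (x₁ : Euc d) (T : Set (Euc d)) : Set (Euc d) :=
  coneOf ((T - {x₁}) ∩ (L(G)ᗮ : Set (Euc d)))

lemma coneOf_mono {A B : Set (Euc d)} (h : A ⊆ B) : coneOf A ⊆ coneOf B := by
  rintro _ ⟨t, ht, a, ha, rfl⟩
  exact ⟨t, ht, a, h ha, rfl⟩

lemma coneOf_subset_submodule {A : Set (Euc d)} {L : Submodule ℝ (Euc d)} (h : A ⊆ L) :
    coneOf A ⊆ L := by
  rintro _ ⟨t, -, a, ha, rfl⟩
  exact L.smul_mem t (h ha)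

lemma inner_nonpos_of_mem_coneOf {A : Set (Euc d)} {n y : Euc d} (h : ∀ a ∈ A, ⟪n, a⟫ ≤ 0)
    (hy : y ∈ coneOf A) : ⟪n, y⟫ ≤ 0 := by
  obtain ⟨t, ht, a, ha, rfl⟩ := hy
  rw [real_inner_smul_right]
  exact mul_nonpos_of_nonneg_of_nonpos ht.le (h a ha)

section starCone

variable {G T T' : Set (Euc d)} {x₁ : Euc d}

lemma zero_mem_starCone (hx₁ : x₁ ∈ T) : (0 : Euc d) ∈ starCone G x₁ T :=
  ⟨1, one_pos, 0, ⟨⟨x₁, hx₁, x₁, rfl, sub_self x₁⟩, Submodule.zero_mem _⟩, (smul_zero 1).symm⟩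

lemma starCone_mono (h : T ⊆ T') : starCone G x₁ T ⊆ starCone G x₁ T' :=
  coneOf_mono (Set.inter_subset_inter_left _ (Set.sub_subset_sub h subset_rfl))

lemma starCone_subset_orthogonal : starCone G x₁ T ⊆ L(G)ᗮ :=
  coneOf_subset_submodule Set.inter_subset_right

lemma starCone_subset_direction (hx₁ : x₁ ∈ T) : starCone G x₁ T ⊆ L(T) := by
  refine coneOf_subset_submodule ?_
  rintro _ ⟨⟨b, hb, c, rfl, rfl⟩, -⟩
  exact sub_mem_direction_affineSpan hb hx₁

lemma exists_sub_eq_add_mem_starCone (hT : Convex ℝ T) (hGT : G ⊆ T)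
    (hx₁ : x₁ ∈ intrinsicInterior ℝ G) {y : Euc d} (hy : y ∈ T) :
    ∃ p ∈ L(G), ∃ q ∈ starCone G x₁ T, y - x₁ = p + q := by
  obtain ⟨p, hp, q, hq, hpq⟩ := L(G).exists_add_mem_mem_orthogonal (y - x₁)
  refine ⟨p, hp, q, ?_, hpq⟩
  -- `x₁ - ε • p` is still in `G`, and a convex combination of it with `y` is `x₁ + λ • q`
  obtain ⟨ε, hε, hxε⟩ := exists_pos_add_smul_mem_of_mem_intrinsicInterior hx₁ (L(G).neg_mem hp)
  set lam : ℝ := ε / (1 + ε)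
  have hlam : 0 < lam := by positivity
  have hmem : lam • y + (1 - lam) • (x₁ + ε • -p) ∈ T :=
    hT hy (hGT hxε) hlam.le (by rw [sub_nonneg, div_le_one (by positivity)]; linarith) (by ring)
  have heq : lam • y + (1 - lam) • (x₁ + ε • -p) - x₁ = lam • q := by
    rw [show y = x₁ + (p + q) by rw [← hpq]; abel]
    match_scalars <;> simp only [lam] <;> field_simp <;> ring
  refine ⟨lam⁻¹, inv_pos.2 hlam, lam • q, ⟨⟨_, hmem, x₁, rfl, heq⟩, L(G)ᗮ.smul_mem _ hq⟩, ?_⟩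
  rw [smul_smul, inv_mul_cancel₀ hlam.ne', one_smul]

end starCone

section faces

variable {s : Finset (Euc d × ℝ)} {P F H : Set (Euc d)} {x y z u : Euc d}

lemma inner_eq_zero_of_mem_normalCone (hFP : F ⊆ P) (hu : u ∈ normalCone P F)
    (hy : y ∈ L(F)) : ⟪u, y⟫ = 0 := by
  rw [direction_affineSpan, vectorSpan_def] at hy
  refine (Submodule.span_le.2 ?_ : _ ≤ LinearMap.ker (innerₗ (Euc d) u)) hy
  rintro _ ⟨a, ha, b, hb, rfl⟩
  have h₁ := hu b hb a (hFP ha)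
  have h₂ := hu a ha b (hFP hb)
  rw [inner_sub_right] at h₁ h₂
  simp only [SetLike.mem_coe, LinearMap.mem_ker, innerₗ_apply_apply, vsub_eq_sub, inner_sub_right]
  linarith

lemma IsFaceOf.eq_setOf_of_mem_intrinsicInterior (hF : IsFaceOf (polyhedron s) F)
    (hy : y ∈ intrinsicInterior ℝ F) :
    F = {z | z ∈ polyhedron s ∧ ∀ h ∈ s, ⟪h.1, y⟫ = h.2 → ⟪h.1, z⟫ = h.2} := by
  have hyF : y ∈ F := intrinsicInterior_subset hy
  have hFP : F ⊆ polyhedron s := hF.2.2.1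
  ext z
  refine ⟨fun hz => ⟨hFP hz, fun h hs hyh => ?_⟩, fun ⟨hzP, hzeq⟩ => ?_⟩
  · obtain ⟨t, ht, hyt⟩ := exists_pos_add_smul_mem_of_mem_intrinsicInterior hy
      (sub_mem_direction_affineSpan hyF hz)
    have h₁ := hFP hyt h hs
    rw [inner_add_right, real_inner_smul_right, inner_sub_right, hyh] at h₁
    nlinarith [hFP hz h hs]
  · have hdir : y - z ∈ tangentCone s y := mem_tangentCone.2 fun h hs hyh => by
      rw [inner_sub_right, hyh, hzeq h hs hyh, sub_self]
    obtain ⟨t, ht, hyt⟩ := exists_pos_add_smul_mem_polyhedron (hFP hyF) hdir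
    refine hF.2.2.right_mem_of_mem_openSegment hyt hzP hyF
      ⟨1 / (1 + t), t / (1 + t), by positivity, by positivity, by field_simp, ?_⟩
    match_scalars
    · field_simp
    · field_simp
      ring

lemma IsFaceOf.mem_of_inner_sub_eq_zero (hH : IsFaceOf (polyhedron s) H) (hx : x ∈ H)
    (hu : u ∈ intrinsicInterior ℝ (normalCone (polyhedron s) H)) (hz : z ∈ polyhedron s)
    (h0 : ⟪u, z - x⟫ = 0) : z ∈ H := by
  obtain ⟨y, hy⟩ := Set.Nonempty.intrinsicInterior hH.2.1 hH.1
  have hdesc := hH.eq_setOf_of_mem_intrinsicInterior hy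
  have hnormal : ∀ h ∈ s, ⟪h.1, y⟫ = h.2 → h.1 ∈ normalCone (polyhedron s) H :=
    fun h hs hyh f hf w hw => by
      rw [inner_sub_right, (hdesc.subset hf).2 h hs hyh]
      linarith [hw h hs]
  rw [hdesc]
  refine ⟨hz, fun h hs hyh => ?_⟩
  -- `u` can be moved away from the normal `h.1` inside `N(P, H)`, which forces equality
  obtain ⟨t, ht, hut⟩ := exists_pos_add_smul_mem_of_mem_intrinsicInterior hu
    (sub_mem_direction_affineSpan (intrinsicInterior_subset hu) (hnormal h hs hyh))
  have h₁ := hut x hx z hz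
  rw [inner_add_left, real_inner_smul_left, inner_sub_left, h0, inner_sub_right,
    (hdesc.subset hx).2 h hs hyh] at h₁
  nlinarith [hz h hs]

lemma IsFaceOf.eventually_add_mem (hF : IsFaceOf (polyhedron s) F) (hx : x ∈ F) :
    ∀ᶠ u in 𝓝 0, u ∈ coneOf (F - {x}) → x + u ∈ F := by
  obtain ⟨y, hy⟩ := Set.Nonempty.intrinsicInterior hF.2.1 hF.1
  have hdesc := hF.eq_setOf_of_mem_intrinsicInterior hy
  have hFP : F ⊆ polyhedron s := hF.2.2.1
  filter_upwards [eventually_add_mem_polyhedron (hFP hx)] with u hu hcone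
  obtain ⟨t, ht, _, ⟨f, hf, _, rfl, rfl⟩, rfl⟩ := hcone
  rw [hdesc]
  refine ⟨hu (PointedCone.smul_mem _ ht.le (sub_mem_tangentCone (hFP hf))), fun h hs hyh => ?_⟩
  rw [inner_add_right, real_inner_smul_right, inner_sub_right, (hdesc.subset hf).2 h hs hyh,
    (hdesc.subset hx).2 h hs hyh]
  ring

end faces

section reduction

variable {s : Finset (Euc d × ℝ)} {P G H F : Set (Euc d)} {L : Submodule ℝ (Euc d)}
  {x₁ x₂ v y : Euc d}

lemma inner_nonpos_of_mem_normalConeIn {T : Set (Euc d)} (hv : v ∈ normalConeIn L T F)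
    (hF : (0 : Euc d) ∈ F) (hy : y ∈ T) : ⟪v, y⟫ ≤ 0 := by
  simpa using hv.2 0 hF y hy

lemma inner_nonneg_of_mem_normalConeIn {T : Set (Euc d)} (hv : v ∈ normalConeIn L T F)
    (hT : (0 : Euc d) ∈ T) (hy : y ∈ F) : 0 ≤ ⟪v, y⟫ := by
  simpa using hv.2 y hy 0 hT

lemma inner_sub_nonpos_of_mem_normalConeIn (hH : Convex ℝ H) (hGH : G ⊆ H)
    (hx₁ : x₁ ∈ intrinsicInterior ℝ G) (hx₁F : x₁ ∈ F) (hL : L ≤ L(G)ᗮ)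
    (hv : v ∈ normalConeIn L (starCone G x₁ H) (starCone G x₁ F)) (hy : y ∈ H) :
    ⟪v, y - x₁⟫ ≤ 0 := by
  obtain ⟨p, hp, q, hq, hpq⟩ := exists_sub_eq_add_mem_starCone hH hGH hx₁ hy
  rw [hpq, inner_add_right, Submodule.inner_left_of_mem_orthogonal hp (hL hv.1), zero_add]
  exact inner_nonpos_of_mem_normalConeIn hv (zero_mem_starCone hx₁F) hq

lemma inner_sub_nonneg_of_mem_normalConeIn (hF : Convex ℝ F) (hGF : G ⊆ F)
    (hx₁ : x₁ ∈ intrinsicInterior ℝ G) (hx₁H : x₁ ∈ H) (hL : L ≤ L(G)ᗮ)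
    (hv : v ∈ normalConeIn L (starCone G x₁ H) (starCone G x₁ F)) (hy : y ∈ F) :
    0 ≤ ⟪v, y - x₁⟫ := by
  obtain ⟨p, hp, q, hq, hpq⟩ := exists_sub_eq_add_mem_starCone hF hGF hx₁ hy
  rw [hpq, inner_add_right, Submodule.inner_left_of_mem_orthogonal hp (hL hv.1), zero_add]
  exact inner_nonneg_of_mem_normalConeIn hv (zero_mem_starCone hx₁H) hq

lemma mem_starCone_sub_normalConeIn (hF : Convex ℝ F) (hGF : G ⊆ F) (hFH : F ⊆ H)
    (hHP : H ⊆ P) (hx₁ : x₁ ∈ intrinsicInterior ℝ G) (hx₂ : -x₂ ∈ normalCone P H) {w : Euc d}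
    (hw : w ∈ L(G)ᗮ ⊓ L(H)) (h : x₁ + x₂ + w ∈ F - normalCone P F) :
    w ∈ starCone G x₁ F - normalConeIn (L(G)ᗮ ⊓ L(H)) (starCone G x₁ H) (starCone G x₁ F) := by
  have hx₁F : x₁ ∈ F := hGF (intrinsicInterior_subset hx₁)
  have hLFH : L(F) ≤ L(H) := AffineSubspace.direction_le (affineSpan_mono ℝ hFH)
  obtain ⟨f, hf, n, hn, hfn⟩ := Set.mem_sub.1 h
  obtain ⟨p, hp, q, hq, hpq⟩ := exists_sub_eq_add_mem_starCone hF hGF hx₁ hf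
  have hqw : q - w = n + x₂ - p := by linear_combination (norm := module) hfn - hpq
  have hqL : q ∈ L(G)ᗮ ⊓ L(H) :=
    ⟨starCone_subset_orthogonal hq, hLFH (starCone_subset_direction hx₁F hq)⟩
  refine ⟨q, hq, q - w, ⟨sub_mem hqL hw, fun φ hφ z hz => ?_⟩, sub_sub_cancel q w⟩
  have hzφ : z - φ ∈ L(G)ᗮ ⊓ L(H) :=
    sub_mem ⟨starCone_subset_orthogonal hz, starCone_subset_direction (hFH hx₁F) hz⟩
      ⟨starCone_subset_orthogonal hφ, hLFH (starCone_subset_direction hx₁F hφ)⟩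
  have hnz : ⟪n, z⟫ ≤ 0 := by
    refine inner_nonpos_of_mem_coneOf ?_ hz
    rintro _ ⟨⟨a, ha, c, hc, rfl⟩, -⟩
    rw [Set.mem_singleton_iff.1 hc]
    exact hn x₁ hx₁F a (hHP ha)
  have hnφ : ⟪n, φ⟫ = 0 := inner_eq_zero_of_mem_normalCone (hFH.trans hHP) hn
    (starCone_subset_direction hx₁F hφ)
  have hx₂zφ : ⟪x₂, z - φ⟫ = 0 := by
    simpa [inner_neg_left] using inner_eq_zero_of_mem_normalCone hHP hx₂ hzφ.2
  have hpzφ : ⟪p, z - φ⟫ = 0 := Submodule.inner_right_of_mem_orthogonal hp hzφ.1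
  rw [hqw, inner_sub_left, inner_add_left, hx₂zφ, hpzφ, inner_sub_right, hnφ]
  linarith

lemma eventually_sub_mem_normalCone (hH : IsFaceOf (polyhedron s) H)
    (hF : IsFaceOf (polyhedron s) F) (hGF : G ⊆ F) (hFH : F ⊆ H)
    (hx₁ : x₁ ∈ intrinsicInterior ℝ G)
    (hx₂ : -x₂ ∈ intrinsicInterior ℝ (normalCone (polyhedron s) H)) :
    ∀ᶠ v in 𝓝 0, v ∈ normalConeIn (L(G)ᗮ ⊓ L(H)) (starCone G x₁ H) (starCone G x₁ F) →
      v - x₂ ∈ normalCone (polyhedron s) F := by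
  have hx₁F : x₁ ∈ F := hGF (intrinsicInterior_subset hx₁)
  have hx₁H : x₁ ∈ H := hFH hx₁F
  have hHP : H ⊆ polyhedron s := hH.2.2.1
  have hx₂N : -x₂ ∈ normalCone (polyhedron s) H := intrinsicInterior_subset hx₂
  obtain ⟨R, hR⟩ := tangentCone_fg (s := s) (x := x₁)
  have hRK : ∀ r ∈ R, r ∈ tangentCone s x₁ := fun r hr => hR ▸ PointedCone.subset_hull hr
  have hu : ∀ r ∈ R, ⟪-x₂, r⟫ ≤ 0 := fun r hr => by
    obtain ⟨t, ht, htr⟩ := exists_pos_add_smul_mem_polyhedron (hHP hx₁H) (hRK r hr)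
    have := hx₂N x₁ hx₁H _ htr
    rw [add_sub_cancel_left, real_inner_smul_right] at this
    nlinarith
  have hN : ∀ r ∈ R, ⟪-x₂, r⟫ = 0 →
      ∀ v ∈ normalConeIn (L(G)ᗮ ⊓ L(H)) (starCone G x₁ H) (starCone G x₁ F), ⟪v, r⟫ ≤ 0 :=
    fun r hr h0 v hv => by
      obtain ⟨t, ht, htr⟩ := exists_pos_add_smul_mem_polyhedron (hHP hx₁H) (hRK r hr)
      have hmem : x₁ + t • r ∈ H := hH.mem_of_inner_sub_eq_zero hx₁H hx₂ htr (by
        rw [add_sub_cancel_left, real_inner_smul_right, h0, mul_zero])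
      have := inner_sub_nonpos_of_mem_normalConeIn hH.2.1 (hGF.trans hFH) hx₁ hx₁F inf_le_left
        hv hmem
      rw [add_sub_cancel_left, real_inner_smul_right] at this
      nlinarith
  filter_upwards [eventually_forall_inner_add_nonpos hu hN] with v hv hvN f hf z hz
  have hz : ⟪-x₂ + v, z - x₁⟫ ≤ 0 := hv hvN _ (hR.ge (sub_mem_tangentCone hz))
  have hx₂f : ⟪-x₂, f - x₁⟫ = 0 :=
    inner_eq_zero_of_mem_normalCone hHP hx₂N (sub_mem_direction_affineSpan (hFH hf) hx₁H)
  have hvf : 0 ≤ ⟪v, f - x₁⟫ :=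
    inner_sub_nonneg_of_mem_normalConeIn hF.2.1 hGF hx₁ hx₁H inf_le_left hvN hf
  rw [sub_eq_neg_add, ← sub_sub_sub_cancel_right z f x₁, inner_sub_right]
  simp only [inner_add_left] at hz ⊢
  linarith

end reduction

end

theorem local_reduction_to_cones_general {d : ℕ} (P G H F : Set (Euc d))
    (hP : IsPolyhedral P) (hH : IsFaceOf P H)
    (x₁ x₂ : Euc d) (hx₁ : x₁ ∈ intrinsicInterior ℝ G)
    (hx₂ : -x₂ ∈ intrinsicInterior ℝ (normalCone P H))
    (hF : IsFaceOf P F) (hGF : G ⊆ F) (hFH : F ⊆ H) :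
    ∃ ε > (0 : ℝ), ∀ w : Euc d,
      w ∈ (affineSpan ℝ G).directionᗮ ⊓ (affineSpan ℝ H).direction → ‖w‖ ≤ ε →
      (x₁ + x₂ + w ∈ F - normalCone P F ↔
        w ∈ coneOf ((F - {x₁}) ∩ ((affineSpan ℝ G).directionᗮ : Set (Euc d))) -
          normalConeIn ((affineSpan ℝ G).directionᗮ ⊓ (affineSpan ℝ H).direction)
            (coneOf ((H - {x₁}) ∩ ((affineSpan ℝ G).directionᗮ : Set (Euc d))))
            (coneOf ((F - {x₁}) ∩ ((affineSpan ℝ G).directionᗮ : Set (Euc d))))) := by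
  obtain ⟨s, rfl⟩ : ∃ s, P = polyhedron s := hP
  have hx₁F : x₁ ∈ F := hGF (intrinsicInterior_subset hx₁)
  obtain ⟨ε, hε, hsmall⟩ := Metric.eventually_nhds_iff.1
    ((hF.eventually_add_mem hx₁F).and (eventually_sub_mem_normalCone hH hF hGF hFH hx₁ hx₂))
  refine ⟨ε / 2, half_pos hε, fun w hw hwε => ⟨mem_starCone_sub_normalConeIn hF.2.1 hGF hFH
    hH.2.2.1 hx₁ (intrinsicInterior_subset hx₂) hw, fun h => ?_⟩⟩
  obtain ⟨u, hu, v, hv, rfl⟩ := Set.mem_sub.1 h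
  have huv : ⟪u, v⟫ ≤ 0 := by
    rw [real_inner_comm]
    exact inner_nonpos_of_mem_normalConeIn hv (zero_mem_starCone hx₁F) (starCone_mono hFH hu)
  obtain ⟨hun, hvn⟩ := norm_le_norm_sub_of_inner_nonpos huv
  have hclose : ∀ y : Euc d, ‖y‖ ≤ ‖u - v‖ → dist y 0 < ε := fun y hy => by
    rw [dist_zero_right]; linarith
  exact Set.mem_sub.2 ⟨x₁ + u, (hsmall (hclose u hun)).1 (coneOf_mono Set.inter_subset_left hu),
    v - x₂, (hsmall (hclose v hvn)).2 hv, by abel⟩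

theorem local_reduction_to_cones {d : ℕ} (P G H F : Set (Euc d))
    (hP : IsPolyhedral P) (hne : P.Nonempty)
    (hG : IsFaceOf P G) (hH : IsFaceOf P H) (hGH : G ⊆ H) (hGneH : G ≠ H)
    (x₁ x₂ : Euc d) (hx₁ : x₁ ∈ intrinsicInterior ℝ G)
    (hx₂ : -x₂ ∈ intrinsicInterior ℝ (normalCone P H))
    (hF : IsFaceOf P F) (hGF : G ⊆ F) (hFH : F ⊆ H) :
    ∃ ε > (0 : ℝ), ∀ w : Euc d,
      w ∈ (affineSpan ℝ G).directionᗮ ⊓ (affineSpan ℝ H).direction → ‖w‖ ≤ ε →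
      (x₁ + x₂ + w ∈ F - normalCone P F ↔
        w ∈ coneOf ((F - {x₁}) ∩ ((affineSpan ℝ G).directionᗮ : Set (Euc d))) -
          normalConeIn ((affineSpan ℝ G).directionᗮ ⊓ (affineSpan ℝ H).direction)
            (coneOf ((H - {x₁}) ∩ ((affineSpan ℝ G).directionᗮ : Set (Euc d))))
            (coneOf ((F - {x₁}) ∩ ((affineSpan ℝ G).directionᗮ : Set (Euc d))))) :=
  local_reduction_to_cones_general P G H F hP hH x₁ x₂ hx₁ hx₂ hF hGF hFH
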